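/- Let u : ℝ³ → ℂ³ be a C² divergence-free vector field, q : ℝ³ → ℂ a C¹ function, and suppose curl(q⁻¹ curl u) = c·u for a constant c, with q nonvanishing. Then for each j ∈ {1,2,3}, ∇q ⋅ (curl u × e_j) = −q·Δu_j − q²·c·u_j pointwise. -/

import Mathlib

noncomputable def pd (f : (Fin 3 → ℝ) → ℂ) (i : Fin 3) (x : Fin 3 → ℝ) : ℂ :=
  fderiv ℝ f x (Pi.single i 1)

noncomputable def jacC (u : (Fin 3 → ℝ) → Fin 3 → ℂ) (x : Fin 3 → ℝ) :
    Matrix (Fin 3) (Fin 3) ℂ :=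
  Matrix.of fun i j => pd (fun y => u y i) j x

noncomputable def divC (u : (Fin 3 → ℝ) → Fin 3 → ℂ) (x : Fin 3 → ℝ) : ℂ :=
  ∑ i : Fin 3, pd (fun y => u y i) i x

noncomputable def curlC (u : (Fin 3 → ℝ) → Fin 3 → ℂ) (x : Fin 3 → ℝ) : Fin 3 → ℂ :=
  fun i => pd (fun y => u y (i + 2)) (i + 1) x - pd (fun y => u y (i + 1)) (i + 2) x

noncomputable def lapC (f : (Fin 3 → ℝ) → ℂ) (x : Fin 3 → ℝ) : ℂ :=
  ∑ i : Fin 3, pd (fun y => pd f i y) i x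

noncomputable def etaC (u v : (Fin 3 → ℝ) → Fin 3 → ℂ) (x : Fin 3 → ℝ) : Fin 3 → ℂ :=
  Matrix.mulVec (jacC u x) (v x) - Matrix.mulVec (jacC v x) (u x)
    + divC u x • v x - divC v x • u x
    - (2 : ℂ) • Matrix.mulVec (Matrix.transpose (jacC u x)) (v x)
    + (2 : ℂ) • Matrix.mulVec (Matrix.transpose (jacC v x)) (u x)

noncomputable def gammaC (u v : (Fin 3 → ℝ) → Fin 3 → ℂ) (x : Fin 3 → ℝ) : ℂ :=
  dotProduct (fun i => pd (fun y => divC u y) i x) (v x)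
    - dotProduct (fun i => pd (fun y => divC v y) i x) (u x)
    - dotProduct (fun i => lapC (fun y => u y i) x) (v x)
    + dotProduct (fun i => lapC (fun y => v y i) x) (u x)

/-! By the product rule, `curl (q⁻¹ curl u) = q⁻¹ curl curl u + ∇(q⁻¹) × curl u`, and
`curl curl u = ∇ div u - Δu = -Δu` for divergence-free `u`, while `∇(q⁻¹) = -q⁻² ∇q`. So the
equation for `u` reads `c u = -q⁻¹ Δu - q⁻² ∇q × curl u`; multiplying by `q²` and taking the
`j`-th component, with `(∇q × curl u)_j = ∇q ⋅ (curl u × e_j)`, gives the identity. -/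

open Matrix

noncomputable def gradC (f : (Fin 3 → ℝ) → ℂ) (x : Fin 3 → ℝ) : Fin 3 → ℂ :=
  fun i => pd f i x

noncomputable def vecLapC (u : (Fin 3 → ℝ) → Fin 3 → ℂ) (x : Fin 3 → ℝ) : Fin 3 → ℂ :=
  fun i => lapC (fun y => u y i) x

section PartialDerivatives

variable {f g : (Fin 3 → ℝ) → ℂ} {x : Fin 3 → ℝ}

lemma pd_add (i : Fin 3) (hf : DifferentiableAt ℝ f x) (hg : DifferentiableAt ℝ g x) :
    pd (fun y => f y + g y) i x = pd f i x + pd g i x := by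
  rw [pd, fderiv_fun_add hf hg]
  rfl

lemma pd_sub (i : Fin 3) (hf : DifferentiableAt ℝ f x) (hg : DifferentiableAt ℝ g x) :
    pd (fun y => f y - g y) i x = pd f i x - pd g i x := by
  rw [pd, fderiv_fun_sub hf hg]
  rfl

lemma pd_mul (i : Fin 3) (hf : DifferentiableAt ℝ f x) (hg : DifferentiableAt ℝ g x) :
    pd (fun y => f y * g y) i x = f x * pd g i x + pd f i x * g x := by
  simp [pd, fderiv_fun_mul hf hg, mul_comm]

lemma pd_inv (i : Fin 3) (hf : DifferentiableAt ℝ f x) (hfx : f x ≠ 0) :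
    pd (fun y => (f y)⁻¹) i x = -pd f i x / f x ^ 2 := by
  rw [pd, show (fun y => (f y)⁻¹) = Inv.inv ∘ f from rfl,
    fderiv_comp x (differentiableAt_inv hfx) hf, ContinuousLinearMap.comp_apply, fderiv_inv' hfx]
  simp only [_root_.neg_apply, ContinuousLinearMap.mulLeftRight_apply, pd]
  field_simp

lemma contDiff_pd {n : WithTop ℕ∞} (hf : ContDiff ℝ (n + 1) f) (i : Fin 3) :
    ContDiff ℝ n fun y => pd f i y :=
  (hf.fderiv_right le_rfl).clm_apply contDiff_const

lemma differentiableAt_pd (hf : ContDiff ℝ 2 f) (i : Fin 3) (x : Fin 3 → ℝ) :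
    DifferentiableAt ℝ (fun y => pd f i y) x :=
  (contDiff_pd (n := 1) hf i).differentiable one_ne_zero x

lemma pd_comm (hf : ContDiff ℝ 2 f) (a b : Fin 3) (x : Fin 3 → ℝ) :
    pd (fun y => pd f a y) b x = pd (fun y => pd f b y) a x := by
  have hd : DifferentiableAt ℝ (fderiv ℝ f) x :=
    (hf.fderiv_right (m := 1) le_rfl).differentiable one_ne_zero x
  have hsymm : IsSymmSndFDerivAt ℝ f x :=
    hf.contDiffAt.isSymmSndFDerivAt (by simp [minSmoothness_of_isRCLikeNormedField])
  simp only [pd, fderiv_clm_apply hd (differentiableAt_const _)]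
  simpa using hsymm.eq _ _

end PartialDerivatives

lemma gradC_inv {f : (Fin 3 → ℝ) → ℂ} {x : Fin 3 → ℝ} (hf : DifferentiableAt ℝ f x)
    (hfx : f x ≠ 0) : gradC (fun y => (f y)⁻¹) x = -(f x ^ 2)⁻¹ • gradC f x := by
  ext i
  simp only [gradC, pd_inv i hf hfx, Pi.smul_apply, smul_eq_mul]
  ring

lemma sum_univ_fin_three_rotate {M : Type*} [AddCommMonoid M] (f : Fin 3 → M) (i : Fin 3) :
    ∑ k, f k = f i + f (i + 1) + f (i + 2) := by
  rw [← Fintype.sum_equiv (Equiv.addLeft i) _ _ fun _ => rfl, Fin.sum_univ_three]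
  simp

lemma dotProduct_cross_single {R : Type*} [CommRing R] (a b : Fin 3 → R) (j : Fin 3) :
    a ⬝ᵥ b ⨯₃ Pi.single j 1 = (a ⨯₃ b) j := by
  rw [triple_product_permutation, triple_product_permutation, single_dotProduct, one_mul]

section Curl

variable {u : (Fin 3 → ℝ) → Fin 3 → ℂ}

lemma contDiff_curlC {n : WithTop ℕ∞} (hu : ContDiff ℝ (n + 1) u) : ContDiff ℝ n (curlC u) :=
  contDiff_pi.2 fun _ =>
    (contDiff_pd (contDiff_pi.1 hu _) _).sub (contDiff_pd (contDiff_pi.1 hu _) _)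

lemma curlC_smul {f : (Fin 3 → ℝ) → ℂ} {x : Fin 3 → ℝ} (hf : DifferentiableAt ℝ f x)
    (hu : DifferentiableAt ℝ u x) :
    curlC (fun y => f y • u y) x = f x • curlC u x + gradC f x ⨯₃ u x := by
  have hui := differentiableAt_pi.1 hu
  ext i
  simp only [curlC, Pi.smul_apply, smul_eq_mul, Pi.add_apply]
  rw [pd_mul _ hf (hui _), pd_mul _ hf (hui _)]
  fin_cases i <;>
    simp only [Fin.zero_eta, Fin.mk_one, Fin.reduceFinMk, Fin.isValue, Fin.reduceAdd, zero_add,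
      cross_apply, gradC, cons_val_zero, cons_val_one, cons_val] <;>
    ring

lemma curlC_curlC (hu : ContDiff ℝ 2 u) (x : Fin 3 → ℝ) :
    curlC (curlC u) x = gradC (divC u) x - vecLapC u x := by
  have hui : ∀ k, ContDiff ℝ 2 fun y => u y k := contDiff_pi.1 hu
  have hd := fun k l => differentiableAt_pd (hui k) l x
  ext i
  have h11 : i + 1 + 1 = i + 2 := by fin_cases i <;> rfl
  have h12 : i + 1 + 2 = i := by fin_cases i <;> rfl
  have h21 : i + 2 + 1 = i := by fin_cases i <;> rfl
  have h22 : i + 2 + 2 = i + 1 := by fin_cases i <;> rfl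
  have hdiv : divC u = fun y => pd (fun z => u z i) i y + pd (fun z => u z (i + 1)) (i + 1) y
      + pd (fun z => u z (i + 2)) (i + 2) y := by
    funext y
    exact sum_univ_fin_three_rotate (fun k => pd (fun z => u z k) k y) i
  simp only [curlC, h11, h12, h21, h22, gradC, vecLapC, lapC, hdiv, Pi.sub_apply]
  rw [pd_sub _ (hd _ _) (hd _ _), pd_sub _ (hd _ _) (hd _ _),
    pd_add _ ((hd _ _).fun_add (hd _ _)) (hd _ _), pd_add _ (hd _ _) (hd _ _),
    sum_univ_fin_three_rotate _ i,
    pd_comm (hui (i + 1)) i (i + 1), pd_comm (hui (i + 2)) i (i + 2)]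
  ring

end Curl

theorem stmt12 (u : (Fin 3 → ℝ) → Fin 3 → ℂ) (q : (Fin 3 → ℝ) → ℂ) (c : ℂ)
    (hu : ContDiff ℝ 2 u) (hq : ContDiff ℝ 1 q)
    (hdiv : ∀ x, divC u x = 0) (hq0 : ∀ x, q x ≠ 0)
    (heq : ∀ x, curlC (fun y => (q y)⁻¹ • curlC u y) x = c • u x) :
    ∀ x (j : Fin 3),
      dotProduct (fun i => pd q i x) (crossProduct (curlC u x) (Pi.single j 1))
        = -(q x) * lapC (fun y => u y j) x - (q x) ^ 2 * c * u x j := by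
  intro x j
  have hqx : DifferentiableAt ℝ q x := hq.differentiable one_ne_zero x
  have hgrad_div : gradC (divC u) x = 0 := by
    ext i
    simp [gradC, pd, show divC u = fun _ => 0 from funext hdiv]
  have hmaxwell := congrFun (heq x) j
  rw [curlC_smul (hqx.fun_inv (hq0 x)) ((contDiff_curlC (n := 1) hu).differentiable one_ne_zero x),
    curlC_curlC hu, gradC_inv hqx (hq0 x), hgrad_div] at hmaxwell
  simp only [zero_sub, smul_neg, neg_smul, map_neg, map_smul, LinearMap.neg_apply,
    LinearMap.smul_apply, Pi.add_apply, Pi.neg_apply, Pi.smul_apply, vecLapC, smul_eq_mul] at hmaxwell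
  have hqx0 := hq0 x
  field_simp at hmaxwell
  change gradC q x ⬝ᵥ curlC u x ⨯₃ Pi.single j 1 = _
  rw [dotProduct_cross_single]
  linear_combination -hmaxwell
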